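/- Let H̄ : ℝ → Matrix (Fin 3) (Fin 3) ℝ be skew-symmetric-valued, and suppose the sequence (eₙ) in ℝ³ satisfies e₀ = 0 and e_{n+1} = eₙ - Δt H̄(t_{n+1/2}) e_{n+1/2} + Δt E_{n+1/2}, where e_{n+1/2} = (eₙ + e_{n+1})/2 and ‖E_{n+1/2}‖ ≤ δ Bₙ for constants δ > 0 and Bₙ ≥ 0. If Δt ≤ 2/3, then ‖e_N‖² ≤ (3/2) N Δt δ² max_n Bₙ² · exp((3/2) N Δt). -/

import Mathlib

open Matrix

noncomputable def mv3 (A : Matrix (Fin 3) (Fin 3) ℝ) (v : EuclideanSpace ℝ (Fin 3)) :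
    EuclideanSpace ℝ (Fin 3) := WithLp.toLp 2 (A.mulVec v)

lemma skew_inner (A : Matrix (Fin 3) (Fin 3) ℝ) (hA : Aᵀ = -A)
    (v : EuclideanSpace ℝ (Fin 3)) : (inner ℝ (mv3 A v) v : ℝ) = 0 := by
  have h1 : (inner ℝ (mv3 A v) v : ℝ) = (A.mulVec v) ⬝ᵥ v := by
    simp [mv3, PiLp.inner_apply, dotProduct, mul_comm]
  have h2 : (A.mulVec v) ⬝ᵥ v = -((A.mulVec v) ⬝ᵥ v) := by
    conv_lhs => rw [dotProduct_comm, Matrix.dotProduct_mulVec,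
      ← Matrix.mulVec_transpose, hA, Matrix.neg_mulVec, neg_dotProduct]
  linarith [h1, h2]

lemma step_ineq (A : Matrix (Fin 3) (Fin 3) ℝ) (hA : Aᵀ = -A)
    (x y F : EuclideanSpace ℝ (Fin 3)) (b Δt : ℝ) (hΔt : 0 < Δt)
    (hrec : y = x - Δt • mv3 A ((1/2 : ℝ) • (x + y)) + Δt • F)
    (hF : ‖F‖ ≤ b) (hb : 0 ≤ b) :
    (1 - Δt/2) * ‖y‖ ^ 2 ≤ (1 + Δt/2) * ‖x‖ ^ 2 + Δt * b ^ 2 := by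
  obtain ⟨m, hm⟩ : ∃ m : EuclideanSpace ℝ (Fin 3), (1/2 : ℝ) • (x + y) = m := ⟨_, rfl⟩
  rw [hm] at hrec
  have hdiff : y - x = -(Δt • mv3 A m) + Δt • F := by rw [hrec]; abel
  have hsum : x + y = (2 : ℝ) • m := by rw [← hm, smul_smul]; norm_num
  have key : ‖y‖ ^ 2 - ‖x‖ ^ 2 = 2 * Δt * (inner ℝ F m : ℝ) := by
    have h1 : (inner ℝ (y - x) (x + y) : ℝ) = ‖y‖ ^ 2 - ‖x‖ ^ 2 := by
      rw [inner_sub_left, inner_add_right, inner_add_right,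
        real_inner_self_eq_norm_sq, real_inner_self_eq_norm_sq,
        real_inner_comm x y]
      ring
    rw [hdiff, hsum, inner_add_left, inner_neg_left, real_inner_smul_left,
      real_inner_smul_left, real_inner_smul_right, real_inner_smul_right,
      skew_inner A hA m] at h1
    linarith [h1]
  have hFm : (inner ℝ F m : ℝ) ≤ ‖F‖ * ‖m‖ := real_inner_le_norm F m
  have hmn : ‖m‖ ≤ (‖x‖ + ‖y‖) / 2 := by
    rw [← hm]
    calc ‖(1/2 : ℝ) • (x + y)‖ = (1/2) * ‖x + y‖ := by
          rw [norm_smul]; simp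
      _ ≤ (‖x‖ + ‖y‖) / 2 := by
          have := norm_add_le x y; linarith
  have hm2 : ‖m‖ ^ 2 ≤ (‖x‖ ^ 2 + ‖y‖ ^ 2) / 2 := by
    have h0 : (0:ℝ) ≤ ‖m‖ := norm_nonneg m
    nlinarith [sq_nonneg (‖x‖ - ‖y‖), norm_nonneg x, norm_nonneg y]
  have hF2 : ‖F‖ ^ 2 ≤ b ^ 2 := by nlinarith [norm_nonneg F]
  have habs : 2 * (inner ℝ F m : ℝ) ≤ ‖F‖ ^ 2 + ‖m‖ ^ 2 := by
    nlinarith [sq_nonneg (‖F‖ - ‖m‖)]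
  nlinarith [mul_le_mul_of_nonneg_left habs hΔt.le,
    mul_le_mul_of_nonneg_left hm2 hΔt.le,
    mul_le_mul_of_nonneg_left hF2 hΔt.le]

set_option maxHeartbeats 1000000 in
/-- Discrete stability estimate for the implicit midpoint rule perturbed by
upscaling errors. -/
theorem midpoint_discrete_stability
    (Hb : ℕ → Matrix (Fin 3) (Fin 3) ℝ)
    (hskew : ∀ n : ℕ, (Hb n)ᵀ = -(Hb n))
    (e E : ℕ → EuclideanSpace ℝ (Fin 3)) (B : ℕ → ℝ) (δ Δt : ℝ)
    (hδ : 0 < δ) (hΔt : 0 < Δt) (hΔt' : Δt ≤ 2/3)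
    (hB : ∀ n : ℕ, 0 ≤ B n)
    (h0 : e 0 = 0)
    (hrec : ∀ n : ℕ, e (n+1) = e n
      - Δt • mv3 (Hb n) ((1/2 : ℝ) • (e n + e (n+1)))
      + Δt • E n)
    (hE : ∀ n : ℕ, ‖E n‖ ≤ δ * B n)
    (N : ℕ) (Bmax : ℝ) (hBmax : ∀ n < N, B n ≤ Bmax) :
    ‖e N‖ ^ 2 ≤ (3/2) * N * Δt * δ ^ 2 * Bmax ^ 2 *
      Real.exp ((3/2) * N * Δt) := by
  obtain ⟨c, hc⟩ : ∃ c : ℝ, (3/2) * Δt = c := ⟨_, rfl⟩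
  obtain ⟨K, hK⟩ : ∃ K : ℝ, (3/2) * Δt * δ ^ 2 * Bmax ^ 2 = K := ⟨_, rfl⟩
  have hc0 : 0 ≤ c := by rw [← hc]; positivity
  have hK0 : 0 ≤ K := by rw [← hK]; positivity
  have hpos : (0:ℝ) < 1 - Δt/2 := by linarith
  have claim : ∀ n, n ≤ N → ‖e n‖ ^ 2 ≤ K * n * (1 + c) ^ n := by
    intro n
    induction n with
    | zero => intro _; simp [h0]
    | succ n ih =>
      intro hn
      have hnN : n < N := Nat.lt_of_succ_le hn
      have ih' := ih (le_of_lt hnN)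
      have hstep := step_ineq (Hb n) (hskew n) (e n) (e (n+1)) (E n)
        (δ * B n) Δt hΔt (hrec n) (hE n)
        (mul_nonneg hδ.le (hB n))
      obtain ⟨a, ha⟩ : ∃ a : ℝ, ‖e n‖ ^ 2 = a := ⟨_, rfl⟩
      obtain ⟨b, hb⟩ : ∃ b : ℝ, ‖e (n+1)‖ ^ 2 = b := ⟨_, rfl⟩
      rw [ha, hb] at hstep
      rw [ha] at ih'
      rw [hb]
      have hBm2 : (δ * B n) ^ 2 ≤ δ ^ 2 * Bmax ^ 2 := by
        have h := hBmax n hnN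
        have hBB : B n * B n ≤ Bmax * Bmax :=
          mul_le_mul h h (hB n) (le_trans (hB n) h)
        nlinarith [sq_nonneg δ, hBB]
      have h1 : (1 - Δt/2) * b ≤
          (1 + Δt/2) * a + Δt * (δ ^ 2 * Bmax ^ 2) := by
        nlinarith [mul_le_mul_of_nonneg_left hBm2 hΔt.le]
      have h2 : (1 + Δt/2) ≤ (1 + c) * (1 - Δt/2) := by
        rw [← hc]; nlinarith
      have h3 : Δt ≤ (3/2) * Δt * (1 - Δt/2) := by nlinarith
      have han : (0:ℝ) ≤ a := ha ▸ sq_nonneg _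
      have hdB : (0:ℝ) ≤ δ ^ 2 * Bmax ^ 2 := by positivity
      have h4 : b ≤ (1 + c) * a + K := by
        have t1 := mul_le_mul_of_nonneg_right h2 han
        have t2 := mul_le_mul_of_nonneg_right h3 hdB
        have hcomb : (1 - Δt/2) * b ≤ (1 - Δt/2) * ((1 + c) * a + K) := by
          rw [← hK]
          ring_nf
          ring_nf at t1 t2 h1
          linarith [t1, t2, h1]
        exact (mul_le_mul_iff_right₀ hpos).mp hcomb
      have h5 : (1:ℝ) ≤ (1 + c) ^ (n+1) := one_le_pow₀ (by linarith)
      have hp : (1 + c) ^ (n+1) = (1 + c) ^ n * (1 + c) := pow_succ _ _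
      have h6 : (1 + c) * a ≤ (1 + c) * (K * n * (1 + c) ^ n) :=
        mul_le_mul_of_nonneg_left ih' (by linarith)
      have h7 : K ≤ K * (1 + c) ^ (n+1) := by
        nlinarith [mul_nonneg hK0 (by linarith [h5] : (0:ℝ) ≤ (1 + c) ^ (n+1) - 1)]
      have h8 : b ≤ (1 + c) * (K * n * (1 + c) ^ n) + K := by linarith
      have h9 : (1 + c) * (K * (n:ℝ) * (1 + c) ^ n) = K * n * (1 + c) ^ (n+1) := by
        rw [hp]; ring
      have h10 : K * ((n:ℝ) + 1) * (1 + c) ^ (n+1)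
          = K * (n:ℝ) * (1 + c) ^ (n+1) + K * (1 + c) ^ (n+1) := by ring
      push_cast
      linarith [h8, h9, h7, h10]
  have hmain := claim N le_rfl
  have hexp : (1 + c) ^ N ≤ Real.exp ((3/2) * N * Δt) := by
    calc (1 + c) ^ N ≤ (Real.exp c) ^ N := by
          apply pow_le_pow_left₀ (by linarith)
          linarith [Real.add_one_le_exp c]
      _ = Real.exp ((3/2) * N * Δt) := by
          rw [← Real.exp_nat_mul]
          congr 1
          rw [← hc]; ring
  calc ‖e N‖ ^ 2 ≤ K * N * (1 + c) ^ N := hmain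
    _ ≤ K * N * Real.exp ((3/2) * N * Δt) := by
        apply mul_le_mul_of_nonneg_left hexp
        exact mul_nonneg hK0 (Nat.cast_nonneg N)
    _ = (3/2) * N * Δt * δ ^ 2 * Bmax ^ 2 * Real.exp ((3/2) * N * Δt) := by
        rw [← hK]; ring
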